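/- arXiv:1707.01630 — 2 statements merged into one kernel-verified Lean document; each statement's English description precedes it below -/
import Mathlib

section
/- For the rhombus R with vertices O(0,0), A(1,0), B(1+1/√2, 1/√2), C(1/√2, 1/√2) endowed with the uniform distribution (density √2), the distortion error of the two centroids obtained by cutting along diagonal OB equals (2√2 + 1)/(18√2), which is strictly greater than the distortion error (2√2 − 1)/(18√2) obtained by cutting along diagonal AC. Hence a region can admit two distinct centroidal Voronoi tessellations with two generators having different distortion errors. -/
/-!
On a horizontal slice of the rhombus the squared distances to the two generators differ by an
affine function of `x`, so the Voronoi boundary (the cutting diagonal) meets the slice in a single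
point `m(y)`. The inner integral is then a sum of two cubic antiderivatives, which after
`√2 ^ 2 = 2` is a quadratic polynomial in `y`; integrating it over `0 ≤ y ≤ √2 / 2` gives the two
distortion errors.
-/

open intervalIntegral Set

theorem integral_sq_sub_add (a k c d : ℝ) :
    ∫ x in c..d, ((x - a) ^ 2 + k) = ((d - a) ^ 3 - (c - a) ^ 3) / 3 + k * (d - c) := by
  rw [integral_add (Continuous.intervalIntegrable (by fun_prop) _ _) intervalIntegrable_const,
    integral_comp_sub_right (· ^ 2), integral_pow, integral_const, smul_eq_mul]
  ring

theorem integral_quadratic (c₀ c₁ c₂ L : ℝ) :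
    ∫ y in (0 : ℝ)..L, (c₀ + c₁ * y + c₂ * y ^ 2) = c₀ * L + c₁ * L ^ 2 / 2 + c₂ * L ^ 3 / 3 := by
  rw [integral_add (Continuous.intervalIntegrable (by fun_prop) _ _)
      (Continuous.intervalIntegrable (by fun_prop) _ _),
    integral_add intervalIntegrable_const (Continuous.intervalIntegrable (by fun_prop) _ _),
    integral_const, integral_const_mul, integral_const_mul, integral_id, integral_pow, smul_eq_mul]
  ring

theorem integral_min_eq_add_of_le_of_ge {f g : ℝ → ℝ} {c m d : ℝ} (hcm : c ≤ m) (hmd : m ≤ d)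
    (hf : IntervalIntegrable f MeasureTheory.volume c m)
    (hg : IntervalIntegrable g MeasureTheory.volume m d)
    (hfg : ∀ x ∈ Icc c m, f x ≤ g x) (hgf : ∀ x ∈ Icc m d, g x ≤ f x) :
    ∫ x in c..d, min (f x) (g x) = (∫ x in c..m, f x) + ∫ x in m..d, g x := by
  have h₁ : EqOn (fun x => min (f x) (g x)) f (uIcc c m) := fun x hx =>
    min_eq_left (hfg x (uIcc_of_le hcm ▸ hx))
  have h₂ : EqOn (fun x => min (f x) (g x)) g (uIcc m d) := fun x hx =>
    min_eq_right (hgf x (uIcc_of_le hmd ▸ hx))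
  rw [← integral_add_adjacent_intervals
      ((intervalIntegrable_congr (h₁.mono uIoc_subset_uIcc)).2 hf)
      ((intervalIntegrable_congr (h₂.mono uIoc_subset_uIcc)).2 hg),
    integral_congr h₁, integral_congr h₂]

theorem integral_min_sq_add_sq {a b ka kb c m d : ℝ} (hab : a < b)
    (hm : (m - a) ^ 2 + ka = (m - b) ^ 2 + kb) (hcm : c ≤ m) (hmd : m ≤ d) :
    ∫ x in c..d, min ((x - a) ^ 2 + ka) ((x - b) ^ 2 + kb) =
      ((m - a) ^ 3 - (c - a) ^ 3) / 3 + ka * (m - c)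
        + (((d - b) ^ 3 - (m - b) ^ 3) / 3 + kb * (d - m)) := by
  have hdiff (x : ℝ) : (x - b) ^ 2 + kb - ((x - a) ^ 2 + ka) = 2 * (b - a) * (m - x) := by
    linear_combination -hm
  have hle (x : ℝ) (hx : x ≤ m) : (x - a) ^ 2 + ka ≤ (x - b) ^ 2 + kb := by
    nlinarith [hdiff x, mul_nonneg (sub_nonneg.2 hab.le) (sub_nonneg.2 hx)]
  have hge (x : ℝ) (hx : m ≤ x) : (x - b) ^ 2 + kb ≤ (x - a) ^ 2 + ka := by
    nlinarith [hdiff x, mul_nonneg (sub_nonneg.2 hab.le) (sub_nonneg.2 hx)]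
  rw [integral_min_eq_add_of_le_of_ge hcm hmd (Continuous.intervalIntegrable (by fun_prop) _ _)
      (Continuous.intervalIntegrable (by fun_prop) _ _) (fun x hx => hle x hx.2)
      (fun x hx => hge x hx.1), integral_sq_sub_add, integral_sq_sub_add]

theorem integral_slice_cut_OB {y : ℝ} (hy : y ∈ Icc 0 (√2 / 2)) :
    ∫ x in y..(y + 1), min ((x - (2 / 3 + √2 / 6)) ^ 2 + (y - √2 / 6) ^ 2)
        ((x - (1 / 3 + √2 / 3)) ^ 2 + (y - √2 / 3) ^ 2)
      = 2 / 9 + √2 / 18 + (-1 / 3 - 2 * √2 / 3) * y + (4 / 3 + √2 / 3) * y ^ 2 := by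
  have hs : √2 ^ 2 = 2 := Real.sq_sqrt zero_le_two
  have hs0 : 0 < √2 := by positivity
  have hsy : √2 * y ≤ 1 := by nlinarith [mul_le_mul_of_nonneg_left hy.2 hs0.le]
  -- the diagonal OB is the line `x = (√2 + 1) y`
  simp_rw [min_comm ((_ : ℝ) ^ 2 + (y - √2 / 6) ^ 2)]
  rw [integral_min_sq_add_sq (m := (√2 + 1) * y) (by nlinarith)
      (by linear_combination (1 / 6 - y / 3) * hs) (by nlinarith [hy.1]) (by linarith)]
  linear_combination (1 / 18 - y ^ 2 / 3 + √2 * y / 6 - √2 * y ^ 2 / 6) * hs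

theorem integral_slice_cut_AC {y : ℝ} (hy : y ∈ Icc 0 (√2 / 2)) :
    ∫ x in y..(y + 1), min ((x - (1 / 3 + √2 / 6)) ^ 2 + (y - √2 / 6) ^ 2)
        ((x - (2 / 3 + √2 / 3)) ^ 2 + (y - √2 / 3) ^ 2)
      = 2 / 9 - √2 / 18 + (1 / 3 - 2 * √2 / 3) * y + (4 / 3 - √2 / 3) * y ^ 2 := by
  have hs : √2 ^ 2 = 2 := Real.sq_sqrt zero_le_two
  have hs0 : 0 < √2 := by positivity
  have hsy : √2 * y ≤ 1 := by nlinarith [mul_le_mul_of_nonneg_left hy.2 hs0.le]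
  -- the diagonal AC is the line `x = 1 - (√2 - 1) y`
  rw [integral_min_sq_add_sq (m := 1 - (√2 - 1) * y) (by linarith)
      (by linear_combination (-1 / 6 - y / 3) * hs) (by linarith) (by nlinarith [hy.1])]
  linear_combination (1 / 18 - y ^ 2 / 3 + √2 * y / 6 + √2 * y ^ 2 / 6) * hs

noncomputable def rhombusDistortion (p q : ℝ × ℝ) : ℝ :=
  √2 * ∫ y in (0 : ℝ)..(1 / √2), ∫ x in y..(y + 1),
    min ((x - p.1) ^ 2 + (y - p.2) ^ 2) ((x - q.1) ^ 2 + (y - q.2) ^ 2)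

theorem one_div_sqrt_two : 1 / √2 = √2 / 2 := by
  field_simp
  exact (Real.sq_sqrt zero_le_two).symm

theorem rhombusDistortion_cut_OB {p q : ℝ × ℝ} (hp : p = (2 / 3 + √2 / 6, √2 / 6))
    (hq : q = (1 / 3 + √2 / 3, √2 / 3)) :
    rhombusDistortion p q = (2 * √2 + 1) / (18 * √2) := by
  subst hp hq
  have hs : √2 ^ 2 = 2 := Real.sq_sqrt zero_le_two
  rw [rhombusDistortion, one_div_sqrt_two,
    integral_congr fun y hy =>
      integral_slice_cut_OB (by rwa [uIcc_of_le (by positivity)] at hy),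
    integral_quadratic, eq_div_iff (by positivity)]
  linear_combination (1 / 2 + √2 + √2 ^ 2 / 4 - √2 ^ 3 / 2 + √2 ^ 4 / 4) * hs

theorem rhombusDistortion_cut_AC {p q : ℝ × ℝ} (hp : p = (1 / 3 + √2 / 6, √2 / 6))
    (hq : q = (2 / 3 + √2 / 3, √2 / 3)) :
    rhombusDistortion p q = (2 * √2 - 1) / (18 * √2) := by
  subst hp hq
  have hs : √2 ^ 2 = 2 := Real.sq_sqrt zero_le_two
  rw [rhombusDistortion, one_div_sqrt_two,
    integral_congr fun y hy =>
      integral_slice_cut_AC (by rwa [uIcc_of_le (by positivity)] at hy),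
    integral_quadratic, eq_div_iff (by positivity)]
  linear_combination (-1 / 2 + √2 - √2 ^ 2 / 4 - √2 ^ 3 / 2 - √2 ^ 4 / 4) * hs

/-- For the rhombus O(0,0), A(1,0), B(1+1/√2,1/√2), C(1/√2,1/√2) with uniform
distribution (density √2), the distortion error of the two centroids arising from
the cut along diagonal OB equals (2√2+1)/(18√2), that of the two centroids arising
from the cut along diagonal AC equals (2√2−1)/(18√2), and the latter is strictly
smaller: two distinct CVTs with two generators have different distortion errors. -/
theorem rhombus_two_cvts (p q p' q' : ℝ × ℝ)
    (hp : p = ((1 / 3) * (1 + 1 / Real.sqrt 2), 1 / (3 * Real.sqrt 2)))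
    (hq : q = ((1 / 3) * (Real.sqrt 2 + 2), Real.sqrt 2 / 3))
    (hp' : p' = ((1 / 3) * (2 + 1 / Real.sqrt 2), 1 / (3 * Real.sqrt 2)))
    (hq' : q' = ((1 / 3) * (Real.sqrt 2 + 1), Real.sqrt 2 / 3)) :
    Real.sqrt 2 * (∫ y in (0:ℝ)..(1 / Real.sqrt 2), ∫ x in y..(y + 1),
        min ((x - p'.1) ^ 2 + (y - p'.2) ^ 2) ((x - q'.1) ^ 2 + (y - q'.2) ^ 2))
      = (2 * Real.sqrt 2 + 1) / (18 * Real.sqrt 2) ∧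
    Real.sqrt 2 * (∫ y in (0:ℝ)..(1 / Real.sqrt 2), ∫ x in y..(y + 1),
        min ((x - p.1) ^ 2 + (y - p.2) ^ 2) ((x - q.1) ^ 2 + (y - q.2) ^ 2))
      = (2 * Real.sqrt 2 - 1) / (18 * Real.sqrt 2) ∧
    (2 * Real.sqrt 2 - 1) / (18 * Real.sqrt 2)
      < (2 * Real.sqrt 2 + 1) / (18 * Real.sqrt 2) := by
  have h₃ : 1 / (3 * √2) = √2 / 6 := by
    field_simp
    norm_num
  refine ⟨rhombusDistortion_cut_OB ?_ ?_, rhombusDistortion_cut_AC ?_ ?_,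
    div_lt_div_of_pos_right (by linarith) (by positivity)⟩
  · rw [hp', one_div_sqrt_two, h₃]; ext <;> ring
  · rw [hq']; ext <;> ring
  · rw [hp, one_div_sqrt_two, h₃]; ext <;> ring
  · rw [hq]; ext <;> ring
end

section
/- For the uniform distribution P on the 4×4 grid S = {(i,j) : 1 ≤ i,j ≤ 4}, the set β = {(2.8, 3.6), (5/3, 5/3), (3.6, 1.8), (1, 3.5), (1,1)} satisfies the centroid condition (each point of β is the mean of the grid points in its Voronoi region) but has distortion error 59/96 ≈ 0.614583, which is strictly larger than the distortion error 7/16 = 0.4375 of the set α₅ = {(7/2,7/2), (3/2,3/2), (3/2,4), (7/2,3/2), (3/2,3)}. Hence the centroid condition is necessary but not sufficient for optimality of a quantizer. -/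
/-!
Every point of the 4×4 grid has a unique nearest point of β (so the cells, defined with `≤`,
do not overlap), and the Voronoi cells are
{(2,3), (2,4), (3,3), (3,4), (4,4)}, {(1,2), (2,1), (2,2)}, {(3,1), (3,2), (4,1), (4,2), (4,3)},
{(1,3), (1,4)} and {(1,1)}, whose means are exactly the points of β. Summing the squared
distances to the nearest point gives 59/6 for β and 7 for α₅.
-/

noncomputable section

def sqDist (s a : ℝ × ℝ) : ℝ := (s.1 - a.1) ^ 2 + (s.2 - a.2) ^ 2

def voronoiCell (S : Finset (ℝ × ℝ)) (β : List (ℝ × ℝ)) (b : ℝ × ℝ) : Finset (ℝ × ℝ) :=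
  S.filter fun s => ∀ b' ∈ β, sqDist s b ≤ sqDist s b'

def centroid (t : Finset (ℝ × ℝ)) : ℝ × ℝ :=
  ((t.card : ℝ)⁻¹ * ∑ s ∈ t, s.1, (t.card : ℝ)⁻¹ * ∑ s ∈ t, s.2)

def squareGrid (n : ℕ) : Finset (ℝ × ℝ) :=
  (Finset.Icc 1 n ×ˢ Finset.Icc 1 n).image fun p => ((p.1 : ℝ), (p.2 : ℝ))

end

lemma natCast_prod_injective :
    Function.Injective fun p : ℕ × ℕ => ((p.1 : ℝ), (p.2 : ℝ)) := fun _ _ h =>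
  Prod.ext (Nat.cast_injective (congrArg Prod.fst h)) (Nat.cast_injective (congrArg Prod.snd h))

lemma sum_squareGrid {M : Type*} [AddCommMonoid M] (n : ℕ) (f : ℝ × ℝ → M) :
    ∑ x ∈ squareGrid n, f x = ∑ i ∈ Finset.Icc 1 n, ∑ j ∈ Finset.Icc 1 n, f (i, j) := by
  rw [squareGrid, Finset.sum_image natCast_prod_injective.injOn, Finset.sum_product]

lemma centroid_filter_squareGrid (n : ℕ) (p : ℝ × ℝ → Prop) [DecidablePred p] :
    centroid ((squareGrid n).filter p) =
      ((∑ i ∈ Finset.Icc 1 n, ∑ j ∈ Finset.Icc 1 n, if p (i, j) then (1 : ℝ) else 0)⁻¹ *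
          ∑ i ∈ Finset.Icc 1 n, ∑ j ∈ Finset.Icc 1 n, if p (i, j) then (i : ℝ) else 0,
        (∑ i ∈ Finset.Icc 1 n, ∑ j ∈ Finset.Icc 1 n, if p (i, j) then (1 : ℝ) else 0)⁻¹ *
          ∑ i ∈ Finset.Icc 1 n, ∑ j ∈ Finset.Icc 1 n, if p (i, j) then (j : ℝ) else 0) := by
  simp only [centroid, Finset.natCast_card_filter, Finset.sum_filter, sum_squareGrid]

lemma Icc_one_four : Finset.Icc (1 : ℕ) 4 = {1, 2, 3, 4} := rfl

set_option maxHeartbeats 1000000 in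
lemma centroid_voronoiCell_squareGrid_four :
    ∀ b ∈ [(2.8, 3.6), (5 / 3, 5 / 3), (3.6, 1.8), (1, 3.5), (1, 1)],
      centroid (voronoiCell (squareGrid 4)
        [(2.8, 3.6), (5 / 3, 5 / 3), (3.6, 1.8), (1, 3.5), (1, 1)] b) = b := by
  simp only [List.forall_mem_cons, voronoiCell, centroid_filter_squareGrid,
    Icc_one_four]
  refine ⟨?_, ?_, ?_, ?_, ?_⟩ <;> norm_num [sqDist, Finset.sum_insert, -Finset.sum_boole]

lemma distortion_squareGrid_four_beta :
    (∑ s ∈ squareGrid 4, ([(2.8, 3.6), (5 / 3, 5 / 3), (3.6, 1.8), (1, 3.5), (1, 1)].map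
      (sqDist s)).foldr min (sqDist s (1, 1))) / 16 = 59 / 96 := by
  rw [sum_squareGrid, Icc_one_four]
  norm_num [sqDist, Finset.sum_insert, min_def]

lemma distortion_squareGrid_four_alpha :
    (∑ s ∈ squareGrid 4, ([(7 / 2, 7 / 2), (3 / 2, 3 / 2), (3 / 2, 4), (7 / 2, 3 / 2), (3 / 2, 3)].map
      (sqDist s)).foldr min (sqDist s (3 / 2, 3))) / 16 = 7 / 16 := by
  rw [sum_squareGrid, Icc_one_four]
  norm_num [sqDist, Finset.sum_insert, min_def]

/-- For the uniform distribution on the 4×4 grid, the set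
β = {(2.8,3.6), (5/3,5/3), (3.6,1.8), (1,3.5), (1,1)} satisfies the centroid condition
(each point is the mean of the grid points in its Voronoi cell), yet its distortion
error 59/96 is strictly larger than the distortion error 7/16 of
α₅ = {(7/2,7/2), (3/2,3/2), (3/2,4), (7/2,3/2), (3/2,3)}: the centroid condition is
necessary but not sufficient for optimality. -/
theorem centroid_condition_not_sufficient
    (d : ℝ × ℝ → ℝ × ℝ → ℝ) (hd : d = fun s a => (s.1 - a.1) ^ 2 + (s.2 - a.2) ^ 2)
    (grid : Finset (ℝ × ℝ))
    (hgrid : grid = (Finset.Icc (1:ℕ) 4 ×ˢ Finset.Icc (1:ℕ) 4).image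
      (fun p => ((p.1 : ℝ), (p.2 : ℝ))))
    (β : List (ℝ × ℝ))
    (hβ : β = [(2.8, 3.6), (5 / 3, 5 / 3), (3.6, 1.8), (1, 3.5), (1, 1)])
    (α₅ : List (ℝ × ℝ))
    (hα : α₅ = [(7 / 2, 7 / 2), (3 / 2, 3 / 2), (3 / 2, 4), (7 / 2, 3 / 2), (3 / 2, 3)]) :
    (∀ b ∈ β,
      ((((grid.filter (fun s => ∀ b' ∈ β, d s b ≤ d s b')).card : ℝ))⁻¹ *
          ∑ s ∈ grid.filter (fun s => ∀ b' ∈ β, d s b ≤ d s b'), s.1,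
        (((grid.filter (fun s => ∀ b' ∈ β, d s b ≤ d s b')).card : ℝ))⁻¹ *
          ∑ s ∈ grid.filter (fun s => ∀ b' ∈ β, d s b ≤ d s b'), s.2) = b) ∧
    (∑ s ∈ grid, (β.map (fun b => d s b)).foldr min (d s (1, 1))) / 16 = 59 / 96 ∧
    (∑ s ∈ grid, (α₅.map (fun a => d s a)).foldr min (d s (3 / 2, 3))) / 16 = 7 / 16 ∧
    (7 / 16 : ℝ) < 59 / 96 := by
  subst hd hgrid hβ hα
  exact ⟨centroid_voronoiCell_squareGrid_four, distortion_squareGrid_four_beta,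
    distortion_squareGrid_four_alpha, by norm_num⟩
end
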